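/- Let p ∈ ℝ with p ≠ 0 and p ≠ 1, let q satisfy 1/p + 1/q = 1, and define F(x) = (N/p)|det x|^(p/N) and G(y) = (N/q)|det y|^(q/N) on N×N matrices. If x has det x ≠ 0 and y is the derivative matrix of F at x (i.e., y_k^n = ∂F/∂x_n^k), then ⟨x, y⟩ − F(x) = G(y), where ⟨x,y⟩ = Σ_{n,k} x_n^k y_k^n. That is, G is the Legendre transform of F. -/

import Mathlib

/-!
By Jacobi's formula `D(det)(x) h = tr (adj x * h)`, the gradient of `F` at `x` is
`y = c • adj x` with `c = |det x| ^ (p/N) / det x`, so `x * y = |det x| ^ (p/N) • 1`.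
Taking traces gives `⟨x, y⟩ = N |det x| ^ (p/N)`, taking determinants gives
`|det y| = |det x| ^ (p - 1)`, and `(p - 1) q = p` turns `|det y| ^ (q/N)` back into
`|det x| ^ (p/N)`.
-/

attribute [local instance] Matrix.normedAddCommGroup Matrix.normedSpace

open Matrix

namespace Matrix

variable {n : Type*} [Fintype n] [DecidableEq n]

theorem det_updateRow_eq_sum_adjugate {R : Type*} [CommRing R] (A : Matrix n n R) (i : n)
    (v : n → R) : (A.updateRow i v).det = ∑ j, A.adjugate j i * v j := by
  rw [← det_transpose, ← updateCol_transpose, ← cramer_apply, cramer_eq_adjugate_mulVec,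
    mulVec, ← adjugate_transpose]
  rfl

variable {𝕜 : Type*} [NontriviallyNormedField 𝕜]

noncomputable def detRowContinuousAlternating : (n → 𝕜) [⋀^n]→L[𝕜] 𝕜 :=
  { detRowAlternating with
    cont := by
      change Continuous fun v : n → n → 𝕜 => (Matrix.of v).det
      fun_prop }

-- Composing with `id` makes the derivative a map on matrices rather than on `n → n → 𝕜`.
theorem hasFDerivAt_det (A : Matrix n n 𝕜) :
    HasFDerivAt det ((detRowContinuousAlternating.1.linearDeriv A).comp
      (ContinuousLinearMap.id 𝕜 (Matrix n n 𝕜))) A :=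
  (detRowContinuousAlternating.hasFDerivAt A).comp A (hasFDerivAt_id A)

theorem fderiv_det_apply (A h : Matrix n n 𝕜) :
    fderiv 𝕜 det A h = trace (A.adjugate * h) := by
  rw [(hasFDerivAt_det A).fderiv]
  refine (ContinuousMultilinearMap.linearDeriv_apply _ _ _).trans ?_
  simp only [trace, diag, mul_apply]
  exact (Finset.sum_congr rfl fun i _ => det_updateRow_eq_sum_adjugate A i (h i)).trans
    Finset.sum_comm

theorem fderiv_comp_det_single {g : 𝕜 → 𝕜} (A : Matrix n n 𝕜)
    (hg : DifferentiableAt 𝕜 g A.det) (i j : n) :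
    fderiv 𝕜 (fun z : Matrix n n 𝕜 => g z.det) A (single i j 1)
      = deriv g A.det * A.adjugate j i := by
  have hcomp : HasFDerivAt (fun z : Matrix n n 𝕜 => g z.det)
      (deriv g A.det • fderiv 𝕜 det A) A := by
    rw [(hasFDerivAt_det A).fderiv]
    exact hg.hasDerivAt.comp_hasFDerivAt A (hasFDerivAt_det A)
  rw [hcomp.fderiv, _root_.smul_apply, fderiv_det_apply, trace_mul_single, MulOpposite.op_one,
    one_smul, smul_eq_mul]

end Matrix

theorem hasDerivAt_abs_rpow_of_ne_zero {t : ℝ} (ht : t ≠ 0) (a : ℝ) :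
    HasDerivAt (fun s : ℝ => |s| ^ a) (a * |t| ^ a / t) t := by
  have ht' : |t| ≠ 0 := abs_ne_zero.mpr ht
  refine ((Real.hasDerivAt_rpow_const (p := a) (Or.inl ht')).comp t
    (hasDerivAt_abs ht)).congr_deriv ?_
  rw [Real.rpow_sub_one ht']
  rcases ht.lt_or_gt with h | h <;> simp [h, abs_of_neg, abs_of_pos] <;> field_simp

theorem sub_one_mul_eq_of_one_div_add_one_div_eq_one {p q : ℝ} (hp0 : p ≠ 0) (hp1 : p ≠ 1)
    (hpq : 1 / p + 1 / q = 1) : (p - 1) * q = p := by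
  have hq0 : q ≠ 0 := by
    rintro rfl
    exact hp1 (by simpa using hpq)
  field_simp at hpq
  linear_combination -hpq

theorem legendre_power_det (N : ℕ) (hN : 0 < N) (p q : ℝ) (hp0 : p ≠ 0) (hp1 : p ≠ 1)
    (hpq : 1 / p + 1 / q = 1) (x y : Matrix (Fin N) (Fin N) ℝ) (hx : x.det ≠ 0)
    (hy : ∀ k n, y k n =
      fderiv ℝ (fun z : Matrix (Fin N) (Fin N) ℝ => ((N : ℝ) / p) * |z.det| ^ (p / (N : ℝ)))
        x (Matrix.single n k 1)) :
    (∑ n, ∑ k, x n k * y k n) - ((N : ℝ) / p) * |x.det| ^ (p / (N : ℝ))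
      = ((N : ℝ) / q) * |y.det| ^ (q / (N : ℝ)) := by
  have hNR : (N : ℝ) ≠ 0 := by positivity
  set d := x.det
  set c := |d| ^ (p / N) / d with hc
  have hgrad : HasDerivAt (fun s : ℝ => (N / p) * |s| ^ (p / N)) c d := by
    refine ((hasDerivAt_abs_rpow_of_ne_zero hx (p / N)).const_mul ((N : ℝ) / p)).congr_deriv ?_
    rw [hc]
    field_simp
  have hy' : y = c • x.adjugate := by
    ext k n
    rw [hy, fderiv_comp_det_single x hgrad.differentiableAt, hgrad.deriv, Matrix.smul_apply,
      smul_eq_mul]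
  have hxy : x * y = |d| ^ (p / N) • (1 : Matrix (Fin N) (Fin N) ℝ) := by
    rw [hy', Matrix.mul_smul, mul_adjugate, smul_smul, div_mul_cancel₀ _ hx]
  have hinner : ∑ n, ∑ k, x n k * y k n = N * |d| ^ (p / N) := by
    rw [show ∑ n, ∑ k, x n k * y k n = trace (x * y) from rfl, hxy, trace_smul, trace_one,
      Fintype.card_fin, smul_eq_mul, mul_comm]
  have hdety : |y.det| = |d| ^ (p - 1) := by
    have h : |d| * |y.det| = |d| ^ p := by
      rw [← abs_mul, ← det_mul, hxy, det_smul, det_one, Fintype.card_fin, mul_one, abs_pow,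
        abs_of_nonneg (by positivity), ← Real.rpow_natCast, ← Real.rpow_mul (abs_nonneg d),
        div_mul_cancel₀ p hNR]
    rw [Real.rpow_sub_one (abs_ne_zero.mpr hx), ← h]
    field_simp
  rw [hinner, hdety, ← Real.rpow_mul (abs_nonneg d), ← mul_div_assoc,
    sub_one_mul_eq_of_one_div_add_one_div_eq_one hp0 hp1 hpq]
  linear_combination (-(N : ℝ) * |d| ^ (p / N)) * hpq
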